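/- arXiv:2008.13586 — 9 statements merged into one kernel-verified Lean document; each statement's English description precedes it below -/
import Mathlib

section
/- Let V be a reflexive Banach space partially ordered by a closed convex cone V₊ (i.e. u ≤ v iff v - u ∈ V₊, with V₊ ∩ (-V₊) = {0}). If {vₙ} ⊂ V is a norm-bounded sequence that is monotone increasing (vₙ ≤ vₙ₊₁ for all n) or monotone decreasing, then there exists v ∈ V such that the full sequence vₙ converges weakly to v. -/
open Filter Topology

/-- Membership in a closed convex set is stable under weak sequential limits. -/
lemma mem_of_weak_tendsto' {V : Type*} [NormedAddCommGroup V] [NormedSpace ℝ V]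
    {s : Set V} (hs : IsClosed s) (hc : Convex ℝ s) {u : ℕ → V} {x : V}
    (hu : ∀ᶠ n in atTop, u n ∈ s)
    (h : ∀ f : V →L[ℝ] ℝ, Tendsto (fun n => f (u n)) atTop (𝓝 (f x))) : x ∈ s := by
  by_contra hx
  obtain ⟨f, c, hfs, hfx⟩ := geometric_hahn_banach_closed_point hc hs hx
  have : f x ≤ c := le_of_tendsto (h f) (hu.mono fun n hn => (hfs _ hn).le)
  linarith

/-- Increasing case of the main theorem. -/
lemma weak_monotone_convergence_incr
    {V : Type*} [NormedAddCommGroup V] [NormedSpace ℝ V]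
    (P : Set V) (hPclosed : IsClosed P) (hPconvex : Convex ℝ P)
    (hPcone : ∀ (c : ℝ) (x : V), 0 ≤ c → x ∈ P → c • x ∈ P)
    (hPpointed : P ∩ (-P) = {0})
    (hrefl : ∀ u : ℕ → V, (∃ M : ℝ, ∀ n, ‖u n‖ ≤ M) →
      ∃ (φ : ℕ → ℕ) (x : V), StrictMono φ ∧
        ∀ f : V →L[ℝ] ℝ, Tendsto (fun n => f (u (φ n))) atTop (𝓝 (f x)))
    (v : ℕ → V) (hbdd : ∃ M : ℝ, ∀ n, ‖v n‖ ≤ M)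
    (hmono : ∀ n, v (n + 1) - v n ∈ P) :
    ∃ x : V, ∀ f : V →L[ℝ] ℝ, Tendsto (fun n => f (v n)) atTop (𝓝 (f x)) := by
  have haddP : ∀ a ∈ P, ∀ b ∈ P, a + b ∈ P := by
    intro a ha b hb
    have h2 := hPcone 2 ((1/2 : ℝ) • a + (1/2 : ℝ) • b)
      (by norm_num) (hPconvex ha hb (by norm_num) (by norm_num) (by norm_num))
    have : (2 : ℝ) • ((1/2 : ℝ) • a + (1/2 : ℝ) • b) = a + b := by
      rw [smul_add, smul_smul, smul_smul]; norm_num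
    rwa [this] at h2
  have hle : ∀ m n, m ≤ n → v n - v m ∈ P := by
    intro m n hmn
    induction n with
    | zero =>
        have : m = 0 := Nat.le_zero.mp hmn
        subst this
        have : v 0 - v 0 = (0 : ℝ) • (v 1 - v 0) := by simp
        rw [this]; exact hPcone 0 _ le_rfl (hmono 0)
    | succ k ih =>
        rcases Nat.lt_or_ge m (k+1) with h | h
        · have hk : m ≤ k := Nat.lt_succ_iff.mp h
          have := haddP _ (hmono k) _ (ih hk)
          have e : v (k+1) - v k + (v k - v m) = v (k+1) - v m := by abel
          rwa [e] at this
        · have : m = k + 1 := le_antisymm hmn h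
          subst this
          have e : v (k+1) - v (k+1) = (0 : ℝ) • (v 1 - v 0) := by simp
          rw [e]; exact hPcone 0 _ le_rfl (hmono 0)
  obtain ⟨φ, x, hφ, hx⟩ := hrefl v hbdd
  -- any weak subsequential limit along a sequence tending to atTop equals x
  have hxm : ∀ m, x - v m ∈ P := by
    intro m
    refine mem_of_weak_tendsto' hPclosed hPconvex (u := fun n => v (φ n) - v m) ?_ ?_
    · filter_upwards [eventually_ge_atTop m] with n hn
      exact hle m (φ n) (hn.trans (hφ.le_apply))
    · intro f
      simpa [map_sub] using (hx f).sub (tendsto_const_nhds (x := f (v m)))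
  have key : ∀ (ψ : ℕ → ℕ) (y : V), Tendsto ψ atTop atTop →
      (∀ f : V →L[ℝ] ℝ, Tendsto (fun n => f (v (ψ n))) atTop (𝓝 (f y))) → y = x := by
    intro ψ y hψ hy
    have hym : ∀ m, y - v m ∈ P := by
      intro m
      refine mem_of_weak_tendsto' hPclosed hPconvex (u := fun n => v (ψ n) - v m) ?_ ?_
      · filter_upwards [hψ.eventually (eventually_ge_atTop m)] with n hn
        exact hle m (ψ n) hn
      · intro f
        simpa [map_sub] using (hy f).sub (tendsto_const_nhds (x := f (v m)))
    have hxy : x - y ∈ P := by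
      refine mem_of_weak_tendsto' hPclosed hPconvex (u := fun n => x - v (ψ n))
        (Eventually.of_forall fun n => hxm (ψ n)) ?_
      intro f
      simpa [map_sub] using (tendsto_const_nhds (x := f x)).sub (hy f)
    have hyx : y - x ∈ P := by
      refine mem_of_weak_tendsto' hPclosed hPconvex (u := fun n => y - v (φ n))
        (Eventually.of_forall fun n => hym (φ n)) ?_
      intro f
      simpa [map_sub] using (tendsto_const_nhds (x := f y)).sub (hx f)
    have hneg : x - y ∈ -P := by
      rw [Set.mem_neg]; simpa [neg_sub] using hyx
    have : x - y ∈ P ∩ (-P) := ⟨hxy, hneg⟩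
    rw [hPpointed] at this
    have := Set.mem_singleton_iff.mp this
    have : x = y := by linear_combination (norm := abel1) this
    exact this.symm
  refine ⟨x, fun f => ?_⟩
  refine tendsto_of_subseq_tendsto fun ns hns => ?_
  obtain ⟨M, hM⟩ := hbdd
  obtain ⟨φ', y, hφ', hy⟩ := hrefl (fun n => v (ns n)) ⟨M, fun n => hM _⟩
  have hcomp : Tendsto (fun n => ns (φ' n)) atTop atTop := hns.comp hφ'.tendsto_atTop
  have : y = x := key (fun n => ns (φ' n)) y hcomp (fun g => hy g)
  exact ⟨φ', by simpa [this] using hy f⟩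

/-- In a reflexive Banach space `V` ordered by a closed convex pointed
cone `P`, every norm-bounded monotone (increasing or decreasing) sequence converges
weakly (as a full sequence). Reflexivity is encoded via the Eberlein–Šmulian
characterization: every norm-bounded sequence has a weakly convergent subsequence. -/
theorem weak_monotone_convergence
    {V : Type*} [NormedAddCommGroup V] [NormedSpace ℝ V]
    (P : Set V) (hPclosed : IsClosed P) (hPconvex : Convex ℝ P)
    (hPcone : ∀ (c : ℝ) (x : V), 0 ≤ c → x ∈ P → c • x ∈ P)
    (hPpointed : P ∩ (-P) = {0})
    (hrefl : ∀ u : ℕ → V, (∃ M : ℝ, ∀ n, ‖u n‖ ≤ M) →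
      ∃ (φ : ℕ → ℕ) (x : V), StrictMono φ ∧
        ∀ f : V →L[ℝ] ℝ, Tendsto (fun n => f (u (φ n))) atTop (𝓝 (f x)))
    (v : ℕ → V) (hbdd : ∃ M : ℝ, ∀ n, ‖v n‖ ≤ M)
    (hmono : (∀ n, v (n + 1) - v n ∈ P) ∨ (∀ n, v n - v (n + 1) ∈ P)) :
    ∃ x : V, ∀ f : V →L[ℝ] ℝ, Tendsto (fun n => f (v n)) atTop (𝓝 (f x)) := by
  rcases hmono with h | h
  · exact weak_monotone_convergence_incr P hPclosed hPconvex hPcone hPpointed hrefl v hbdd h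
  · obtain ⟨M, hM⟩ := hbdd
    obtain ⟨x, hx⟩ := weak_monotone_convergence_incr P hPclosed hPconvex hPcone hPpointed hrefl
      (fun n => -v n) ⟨M, fun n => by simpa using hM n⟩
      (fun n => by simpa [neg_add_eq_sub, sub_eq_add_neg] using h n)
    refine ⟨-x, fun f => ?_⟩
    have := (hx f).neg
    simp only [map_neg, neg_neg] at this ⊢
    exact this
end

section
/- Let V be a Hilbert space, A: V → V* linear, bounded with constant C_b and coercive with constant C_a > 0. Let Φ: V → V be increasing and satisfy ‖Φ(v)‖ ≤ C_X ‖v‖ for all v with C_X < C_a/C_b. Suppose {yₙ} is a sequence with yₙ ≤ yₙ₋₁ (decreasing) where each yₙ solves the variational inequality: yₙ ≤ Φ(yₙ₋₁) and ⟨A yₙ − f, yₙ − v⟩ ≤ 0 for all v ≤ Φ(yₙ₋₁). Then {yₙ} is bounded in V: specifically C_a‖yₙ‖² ≤ C_b C_X‖yₙ‖² + (1 + C_X)‖f‖_{V*}‖yₙ‖ and hence ‖yₙ‖ ≤ (1+C_X)‖f‖_{V*}/(C_a − C_b C_X). -/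
/-!
Test the variational inequality for `yₙ₊₁` with `v = Φ yₙ₊₁`; this is admissible because
`yₙ₊₁ ≤ yₙ` and `Φ` is increasing, so `Φ yₙ₊₁ ≤ Φ yₙ`. Coercivity, boundedness of `A` and the
linear growth of `Φ` then give `C_a ‖yₙ₊₁‖² ≤ C_b C_X ‖yₙ₊₁‖² + (1 + C_X) ‖f‖ ‖yₙ₊₁‖`, and
`C_b C_X < C_a` lets one divide by `(C_a - C_b C_X) ‖yₙ₊₁‖`.
-/

open ContinuousLinearMap

theorem coercive_mul_norm_sq_le_of_variational_ineq
    {V : Type*} [NormedAddCommGroup V] [NormedSpace ℝ V]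
    (A : V →L[ℝ] V →L[ℝ] ℝ) (f : V →L[ℝ] ℝ) {Ca Cb CX : ℝ} (hCb : 0 ≤ Cb)
    (hbound : ∀ u v : V, A u v ≤ Cb * ‖u‖ * ‖v‖) (hcoerc : ∀ u : V, Ca * ‖u‖ ^ 2 ≤ A u u)
    {z w : V} (hw : ‖w‖ ≤ CX * ‖z‖) (hVI : (A z - f) (z - w) ≤ 0) :
    Ca * ‖z‖ ^ 2 ≤ Cb * CX * ‖z‖ ^ 2 + (1 + CX) * ‖f‖ * ‖z‖ := by
  have hexpand : A z z ≤ A z w + f z - f w := by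
    simp only [sub_apply, map_sub] at hVI
    linarith
  have hfz : f z ≤ ‖f‖ * ‖z‖ := (le_abs_self _).trans (f.le_opNorm z)
  have hfw : -f w ≤ ‖f‖ * ‖w‖ := (neg_le_abs _).trans (f.le_opNorm w)
  have hAzw : Cb * ‖z‖ * ‖w‖ ≤ Cb * ‖z‖ * (CX * ‖z‖) := by gcongr
  have hfw' : ‖f‖ * ‖w‖ ≤ ‖f‖ * (CX * ‖z‖) := by gcongr
  nlinarith [hcoerc z, hbound z w]

theorem le_div_of_mul_sq_le_mul {a b x : ℝ} (ha : 0 < a) (hb : 0 ≤ b) (hx : 0 ≤ x)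
    (h : a * x ^ 2 ≤ b * x) : x ≤ b / a := by
  rw [le_div_iff₀ ha]
  rcases hx.eq_or_lt with rfl | hx
  · simpa using hb
  · nlinarith

theorem nonneg_of_forall_norm_le_mul_norm {E F : Type*} [NormedAddCommGroup E] [Nontrivial E]
    [NormedAddCommGroup F] {g : E → F} {C : ℝ} (hg : ∀ v, ‖g v‖ ≤ C * ‖v‖) : 0 ≤ C := by
  obtain ⟨v, hv⟩ := exists_ne (0 : E)
  have hv : 0 < ‖v‖ := norm_pos_iff.mpr hv
  exact nonneg_of_mul_nonneg_left ((norm_nonneg _).trans (hg v)) hv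

theorem iterates_bounded_general
    {V : Type*} [NormedAddCommGroup V] [InnerProductSpace ℝ V]
    (P : Set V)
    (A : V →L[ℝ] V →L[ℝ] ℝ) (Ca Cb CX : ℝ) (hCb : 0 < Cb)
    (hbound : ∀ u v : V, A u v ≤ Cb * ‖u‖ * ‖v‖)
    (hcoerc : ∀ u : V, Ca * ‖u‖ ^ 2 ≤ A u u)
    (Φ : V → V)
    (hΦmono : ∀ u v : V, v - u ∈ P → Φ v - Φ u ∈ P)
    (hΦnorm : ∀ v : V, ‖Φ v‖ ≤ CX * ‖v‖) (hCX : CX < Ca / Cb)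
    (f : V →L[ℝ] ℝ) (y : ℕ → V)
    (hdec : ∀ n, y n - y (n + 1) ∈ P)
    (hVI : ∀ n, Φ (y n) - y (n + 1) ∈ P ∧
      ∀ v : V, Φ (y n) - v ∈ P → (A (y (n + 1)) - f) (y (n + 1) - v) ≤ 0) :
    ∀ n, Ca * ‖y (n + 1)‖ ^ 2 ≤
        Cb * CX * ‖y (n + 1)‖ ^ 2 + (1 + CX) * ‖f‖ * ‖y (n + 1)‖ ∧
      ‖y (n + 1)‖ ≤ (1 + CX) * ‖f‖ / (Ca - Cb * CX) := by
  intro n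
  have hgap : 0 < Ca - Cb * CX := by
    have := (lt_div_iff₀ hCb).mp hCX
    linarith
  have henergy := coercive_mul_norm_sq_le_of_variational_ineq A f hCb.le hbound hcoerc
    (hΦnorm (y (n + 1))) ((hVI n).2 _ (hΦmono _ _ (hdec n)))
  refine ⟨henergy, le_div_of_mul_sq_le_mul hgap ?_ (norm_nonneg _) (by linarith)⟩
  rcases subsingleton_or_nontrivial V with hV | hV
  · simp [Subsingleton.elim f 0]
  · have := nonneg_of_forall_norm_le_mul_norm hΦnorm
    positivity

/-- uniform bound for the decreasing iterates of the QVI iteration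
scheme, under the smallness condition `C_X < C_a / C_b` on the obstacle map. -/
theorem iterates_bounded
    {V : Type*} [NormedAddCommGroup V] [InnerProductSpace ℝ V] [CompleteSpace V]
    (P : Set V) (hPclosed : IsClosed P)
    (A : V →L[ℝ] V →L[ℝ] ℝ) (Ca Cb CX : ℝ) (hCa : 0 < Ca) (hCb : 0 < Cb)
    (hbound : ∀ u v : V, A u v ≤ Cb * ‖u‖ * ‖v‖)
    (hcoerc : ∀ u : V, Ca * ‖u‖ ^ 2 ≤ A u u)
    (Φ : V → V)
    (hΦmono : ∀ u v : V, v - u ∈ P → Φ v - Φ u ∈ P)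
    (hΦnorm : ∀ v : V, ‖Φ v‖ ≤ CX * ‖v‖) (hCX : CX < Ca / Cb)
    (f : V →L[ℝ] ℝ) (y : ℕ → V)
    (hdec : ∀ n, y n - y (n + 1) ∈ P)
    (hVI : ∀ n, Φ (y n) - y (n + 1) ∈ P ∧
      ∀ v : V, Φ (y n) - v ∈ P → (A (y (n + 1)) - f) (y (n + 1) - v) ≤ 0) :
    ∀ n, Ca * ‖y (n + 1)‖ ^ 2 ≤
        Cb * CX * ‖y (n + 1)‖ ^ 2 + (1 + CX) * ‖f‖ * ‖y (n + 1)‖ ∧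
      ‖y (n + 1)‖ ≤ (1 + CX) * ‖f‖ / (Ca - Cb * CX) :=
  iterates_bounded_general P A Ca Cb CX hCb hbound hcoerc Φ hΦmono hΦnorm hCX f y hdec hVI
end

section
/- (Birkhoff–Tartar fixed point theorem) Let H be a Hilbert space ordered by a closed convex cone C satisfying C = {h ∈ H : (h,g)_H ≥ 0 for all g ∈ C}. Let T: H → H be increasing (h₁ ≤ h₂ ⟹ T(h₁) ≤ T(h₂)), and suppose there exist a subsolution h̲ with h̲ ≤ T(h̲) and a supersolution h̄ with T(h̄) ≤ h̄, and h̲ ≤ h̄. Then the set of fixed points of T in the order interval [h̲, h̄] is nonempty and possesses a minimal element and a maximal element. -/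
/-!
Order `H` by the cone `C`. As `C` lies in its dual cone, `a ≤ p ≤ q ≤ b` implies
`‖q - p‖² ≤ ⟪q - p, b - a⟫`, so along an increasing net in `[a, b]` the increasing bounded real net
`⟪·, b - a⟫` controls distances and the net converges. Hence every nonempty chain in `[a, b]` has a
supremum, its limit, and (by `x ↦ -x`) an infimum. Zorn's lemma, applied to the subsolutions lying
below every supersolution in `[a, b]`, gives a maximal one, which is the least fixed point; the
greatest fixed point is the least one for the reversed order.
-/

open Set Filter Topology Function
open scoped RealInnerProductSpace

section FixedPoint

variable {α : Type*} [PartialOrder α] {f : α → α} {a b : α}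

theorem exists_isLeast_fixedPoints_Icc (hf : Monotone f) (ha : a ≤ f a) (hb : f b ≤ b)
    (hab : a ≤ b) (hchain : ∀ c ⊆ Icc a b, IsChain (· ≤ ·) c → c.Nonempty → ∃ z, IsLUB c z) :
    ∃ m, IsLeast (fixedPoints f ∩ Icc a b) m := by
  set S := {x | a ≤ x ∧ x ≤ f x ∧ ∀ w ∈ Icc a b, f w ≤ w → x ≤ w}
  have le_b : ∀ x ∈ S, x ≤ b := fun x hx => hx.2.2 b ⟨hab, le_rfl⟩ hb
  have chain_bdd : ∀ c ⊆ S, IsChain (· ≤ ·) c → ∀ y ∈ c, ∃ ub ∈ S, ∀ x ∈ c, x ≤ ub := by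
    intro c hcS hc y hy
    obtain ⟨z, hz⟩ := hchain c (fun x hx => ⟨(hcS hx).1, le_b x (hcS hx)⟩) hc ⟨y, hy⟩
    refine ⟨z, ⟨(hcS hy).1.trans (hz.1 hy), ?_, fun w hw hfw => ?_⟩, hz.1⟩
    · exact hz.2 fun x hx => (hcS hx).2.1.trans (hf (hz.1 hx))
    · exact hz.2 fun x hx => (hcS hx).2.2 w hw hfw
  obtain ⟨m, -, hm⟩ := zorn_le_nonempty₀ S chain_bdd a ⟨le_rfl, ha, fun w hw _ => hw.1⟩
  obtain ⟨ham, hmfm, hm_le⟩ := hm.prop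
  have hfm : f m ∈ S :=
    ⟨ham.trans hmfm, hf hmfm, fun w hw hfw => (hf (hm_le w hw hfw)).trans hfw⟩
  exact ⟨m, ⟨(hm.le_of_ge hfm hmfm).antisymm hmfm, ham, le_b m hm.prop⟩,
    fun x ⟨hx, hxab⟩ => hm_le x hxab hx.le⟩

theorem exists_isGreatest_fixedPoints_Icc (hf : Monotone f) (ha : a ≤ f a) (hb : f b ≤ b)
    (hab : a ≤ b) (hchain : ∀ c ⊆ Icc a b, IsChain (· ≤ ·) c → c.Nonempty → ∃ z, IsGLB c z) :
    ∃ M, IsGreatest (fixedPoints f ∩ Icc a b) M := by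
  obtain ⟨M, hM⟩ := exists_isLeast_fixedPoints_Icc (α := αᵒᵈ) hf.dual hb ha hab
    fun c hc hch hne => hchain c (fun x hx => (hc hx).symm) hch.symm hne
  exact ⟨M, ⟨hM.1.1, hM.1.2.symm⟩, fun x hx => hM.2 ⟨hx.1, hx.2.symm⟩⟩

end FixedPoint

theorem Convex.add_mem_of_smul_mem {E : Type*} [AddCommGroup E] [Module ℝ E] {s : Set E}
    (hs : Convex ℝ s) (hsmul : ∀ ⦃c : ℝ⦄, 0 < c → ∀ ⦃x⦄, x ∈ s → c • x ∈ s) {x y : E}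
    (hx : x ∈ s) (hy : y ∈ s) : x + y ∈ s := by
  have hmid : (1 / 2 : ℝ) • x + (1 / 2 : ℝ) • y ∈ s :=
    hs hx hy (by norm_num) (by norm_num) (by norm_num)
  simpa [smul_add, smul_smul] using hsmul two_pos hmid

section InnerProductSpace

variable {H : Type*} [NormedAddCommGroup H] [InnerProductSpace ℝ H]

theorem ConvexCone.salient_of_inner_nonneg (K : ConvexCone ℝ H)
    (hK : ∀ x ∈ K, ∀ y ∈ K, 0 ≤ ⟪x, y⟫) : K.Salient := by
  intro x hx hx0 hnx
  have : ⟪x, x⟫ ≤ 0 := by simpa [inner_neg_left] using hK _ hnx _ hx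
  exact hx0 (inner_self_eq_zero.1 (this.antisymm real_inner_self_nonneg))

variable [PartialOrder H] [IsOrderedAddMonoid H]

theorem inner_le_inner_of_le (hinner : ∀ ⦃x y : H⦄, 0 ≤ x → 0 ≤ y → 0 ≤ ⟪x, y⟫) {x y z : H}
    (hxy : x ≤ y) (hz : 0 ≤ z) : ⟪x, z⟫ ≤ ⟪y, z⟫ :=
  sub_nonneg.1 (by simpa [inner_sub_left] using hinner (sub_nonneg.2 hxy) hz)

theorem norm_sub_sq_le_inner (hinner : ∀ ⦃x y : H⦄, 0 ≤ x → 0 ≤ y → 0 ≤ ⟪x, y⟫)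
    {a p q b : H} (hap : a ≤ p) (hpq : p ≤ q) (hqb : q ≤ b) :
    ‖q - p‖ ^ 2 ≤ ⟪q - p, b - a⟫ := by
  have h₁ := hinner (sub_nonneg.2 hpq) (sub_nonneg.2 hqb)
  have h₂ := hinner (sub_nonneg.2 hpq) (sub_nonneg.2 hap)
  have hsplit : b - a = (b - q) + (p - a) + (q - p) := by abel
  rw [hsplit, inner_add_right, inner_add_right, real_inner_self_eq_norm_sq]
  linarith

theorem Monotone.exists_tendsto_of_mem_Icc [CompleteSpace H]
    (hinner : ∀ ⦃x y : H⦄, 0 ≤ x → 0 ≤ y → 0 ≤ ⟪x, y⟫) {ι : Type*} [SemilatticeSup ι]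
    [Nonempty ι] {u : ι → H} (hu : Monotone u) {a b : H} (hmem : ∀ i, u i ∈ Icc a b) :
    ∃ z, Tendsto u atTop (𝓝 z) := by
  have hab : 0 ≤ b - a := sub_nonneg.2 ((hmem (Classical.arbitrary ι)).1.trans (hmem _).2)
  set φ : ι → ℝ := fun i => ⟪u i, b - a⟫
  have hφ : Monotone φ := fun i j hij => inner_le_inner_of_le hinner (hu hij) hab
  have hbdd : BddAbove (range φ) := ⟨⟪b, b - a⟫, by
    rintro _ ⟨i, rfl⟩
    exact inner_le_inner_of_le hinner (hmem i).2 hab⟩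
  have hdist : ∀ i j, i ≤ j → dist (u i) (u j) ≤ √((⨆ k, φ k) - φ i) := by
    intro i j hij
    rw [dist_comm, dist_eq_norm]
    refine Real.le_sqrt_of_sq_le ?_
    calc ‖u j - u i‖ ^ 2 ≤ ⟪u j - u i, b - a⟫ :=
          norm_sub_sq_le_inner hinner (hmem i).1 (hu hij) (hmem j).2
      _ = φ j - φ i := inner_sub_left _ _ _
      _ ≤ (⨆ k, φ k) - φ i := by gcongr; exact le_ciSup hbdd j
  have hlim : Tendsto (fun i => √((⨆ k, φ k) - φ i)) atTop (𝓝 0) := by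
    simpa using ((tendsto_const_nhds (x := ⨆ k, φ k)).sub (tendsto_atTop_ciSup hφ hbdd)).sqrt
  exact cauchySeq_tendsto_of_complete (cauchySeq_of_le_tendsto_0' _ hdist hlim)

theorem IsChain.exists_isLUB_of_subset_Icc [CompleteSpace H] [OrderClosedTopology H]
    (hinner : ∀ ⦃x y : H⦄, 0 ≤ x → 0 ≤ y → 0 ≤ ⟪x, y⟫)
    {a b : H} {c : Set H} (hc : IsChain (· ≤ ·) c) (hne : c.Nonempty) (hcab : c ⊆ Icc a b) :
    ∃ z, IsLUB c z := by
  have := hne.to_subtype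
  classical
  let := hc.linearOrder
  have hval : Monotone ((↑) : c → H) := fun _ _ h => h
  obtain ⟨z, hz⟩ := hval.exists_tendsto_of_mem_Icc hinner fun i => hcab i.2
  exact ⟨z, Subtype.range_coe (s := c) ▸ isLUB_of_tendsto_atTop hval hz⟩

theorem IsChain.exists_isGLB_of_subset_Icc [CompleteSpace H] [OrderClosedTopology H]
    (hinner : ∀ ⦃x y : H⦄, 0 ≤ x → 0 ≤ y → 0 ≤ ⟪x, y⟫)
    {a b : H} {c : Set H} (hc : IsChain (· ≤ ·) c) (hne : c.Nonempty) (hcab : c ⊆ Icc a b) :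
    ∃ z, IsGLB c z := by
  have hneg : IsChain (· ≤ ·) (-c) := fun x hx y hy hxy =>
    (hc hx hy (neg_injective.ne hxy)).symm.imp neg_le_neg_iff.1 neg_le_neg_iff.1
  have hnegab : -c ⊆ Icc (-b) (-a) := neg_Icc a b ▸ neg_subset_neg.2 hcab
  obtain ⟨z, hz⟩ := hneg.exists_isLUB_of_subset_Icc hinner hne.neg hnegab
  exact ⟨-z, isLUB_neg.1 hz⟩

end InnerProductSpace

/-- Birkhoff–Tartar: an increasing map on a Hilbert space ordered by a
self-dual closed convex cone, admitting a subsolution below a supersolution, has a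
nonempty fixed-point set in the order interval, with minimal and maximal elements. -/
theorem birkhoff_tartar
    {H : Type*} [NormedAddCommGroup H] [InnerProductSpace ℝ H] [CompleteSpace H]
    (C : Set H) (hCclosed : IsClosed C) (hCconvex : Convex ℝ C)
    (hCcone : ∀ (c : ℝ) (x : H), 0 ≤ c → x ∈ C → c • x ∈ C)
    (hCselfdual : C = {h : H | ∀ g ∈ C, 0 ≤ (inner ℝ h g : ℝ)})
    (T : H → H)
    (hTmono : ∀ h₁ h₂ : H, h₂ - h₁ ∈ C → T h₂ - T h₁ ∈ C)
    (hsub hsup : H)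
    (hsubsol : T hsub - hsub ∈ C) (hsupsol : hsup - T hsup ∈ C)
    (hle : hsup - hsub ∈ C) :
    (∃ m : H, (T m = m ∧ m - hsub ∈ C ∧ hsup - m ∈ C) ∧
        ∀ x : H, T x = x → x - hsub ∈ C → hsup - x ∈ C → x - m ∈ C) ∧
    (∃ M : H, (T M = M ∧ M - hsub ∈ C ∧ hsup - M ∈ C) ∧
        ∀ x : H, T x = x → x - hsub ∈ C → hsup - x ∈ C → M - x ∈ C) := by
  have hpos : ∀ x ∈ C, ∀ y ∈ C, 0 ≤ ⟪x, y⟫ := fun x hx y hy => hCselfdual.subset hx y hy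
  have hsmul : ∀ ⦃c : ℝ⦄, 0 < c → ∀ ⦃x⦄, x ∈ C → c • x ∈ C :=
    fun c hc x hx => hCcone c x hc.le hx
  let K : ConvexCone ℝ H := ⟨C, hsmul, fun _ hx _ hy => hCconvex.add_mem_of_smul_mem hsmul hx hy⟩
  have hK0 : K.Pointed := (by simpa using hCcone 0 _ le_rfl hle : (0 : H) ∈ C)
  have hKsal : K.Salient := K.salient_of_inner_nonneg hpos
  let : PartialOrder H := K.toPartialOrder hK0 hKsal
  have : IsOrderedAddMonoid H := K.to_isOrderedAddMonoid hK0 hKsal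
  have hnonneg : ∀ x : H, 0 ≤ x ↔ x ∈ C := fun x => by
    rw [show 0 ≤ x ↔ x - 0 ∈ C from Iff.rfl, sub_zero]
  have hinner : ∀ ⦃x y : H⦄, 0 ≤ x → 0 ≤ y → 0 ≤ ⟪x, y⟫ :=
    fun x y hx hy => hpos x ((hnonneg x).1 hx) y ((hnonneg y).1 hy)
  have hclosed : IsClosed {x : H | 0 ≤ x} := by simpa only [hnonneg, ofPred_mem_eq] using hCclosed
  have : OrderClosedTopology H := ⟨isClosed_le_of_isClosed_nonneg hclosed⟩
  have hT : Monotone T := fun x y h => hTmono x y h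
  obtain ⟨m, hm⟩ := exists_isLeast_fixedPoints_Icc hT hsubsol hsupsol hle
    fun c hcab hc hne => hc.exists_isLUB_of_subset_Icc hinner hne hcab
  obtain ⟨M, hM⟩ := exists_isGreatest_fixedPoints_Icc hT hsubsol hsupsol hle
    fun c hcab hc hne => hc.exists_isGLB_of_subset_Icc hinner hne hcab
  exact ⟨⟨m, hm.1, fun x hx hax hxb => hm.2 ⟨hx, hax, hxb⟩⟩,
    ⟨M, hM.1, fun x hx hax hxb => hM.2 ⟨hx, hax, hxb⟩⟩⟩
end

section
/- Let V be a reflexive Banach space ordered by a closed convex cone, with B: V → V* linear, bounded, coercive and T-monotone (⟨Bu⁺, u⁻⟩ ≤ 0 where u⁺ = sup(0,u), u⁻ = u⁺ − u). For g ∈ V* define Φ(u) ∈ V as the unique solution of BΦ(u) = g + u. Given any v₀ ∈ V, if g ≥ Bv₀ − v₀ in V*, then v₀ ≤ Φ(v₀). -/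
/-- for the obstacle map `Φ` given by solving `BΦ(u) = g + u` with `B`
linear, bounded, coercive and T-monotone, if `g ≥ B v₀ − v₀` in `V*` then
`v₀ ≤ Φ(v₀)`. The vector lattice structure is encoded through the positive-part
map `pos` (`pos u = sup(0,u)`), with `u⁻ = pos u − u`, and the embedding `ι` of
`V` into `V*` gives meaning to `B v₀ − v₀ ∈ V*`. -/
theorem subsolution_of_pde_obstacle
    {V : Type*} [NormedAddCommGroup V] [NormedSpace ℝ V]
    (P : Set V) (hPclosed : IsClosed P)
    (pos : V → V)
    (hposmem : ∀ u : V, pos u ∈ P)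
    (hnegmem : ∀ u : V, pos u - u ∈ P)
    (hposid : ∀ u : V, u ∈ P → pos u = u)
    (B : V →L[ℝ] V →L[ℝ] ℝ) (Cb c : ℝ) (hc : 0 < c)
    (hbdd : ∀ u v : V, B u v ≤ Cb * ‖u‖ * ‖v‖)
    (hcoerc : ∀ u : V, c * ‖u‖ ^ 2 ≤ B u u)
    (hTmono : ∀ u : V, B (pos u) (pos u - u) ≤ 0)
    (ι : V →L[ℝ] V →L[ℝ] ℝ)
    (hι : ∀ v ∈ P, ∀ w ∈ P, 0 ≤ ι v w)
    (g : V →L[ℝ] ℝ) (Φ : V → V)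
    (hΦ : ∀ u : V, B (Φ u) = g + ι u)
    (v₀ : V)
    (hg : ∀ w ∈ P, 0 ≤ (g - (B v₀ - ι v₀)) w) :
    Φ v₀ - v₀ ∈ P := by
  set u : V := Φ v₀ - v₀ with hu
  set w : V := pos u - u with hw
  have hwP : w ∈ P := hnegmem u
  -- B u w = (g - (B v₀ - ι v₀)) w ≥ 0
  have h1 : B u w = (g - (B v₀ - ι v₀)) w := by
    have hB := hΦ v₀
    simp only [hu, map_sub, hB, ContinuousLinearMap.sub_apply,
      ContinuousLinearMap.add_apply]
    ring
  have h2 : 0 ≤ B u w := by rw [h1]; exact hg w hwP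
  -- coercivity + T-monotonicity give c‖w‖² ≤ -B u w
  have h3 : c * ‖w‖ ^ 2 ≤ B w w := hcoerc w
  have h4 : B w w = B (pos u) w - B u w := by
    simp only [hw, map_sub, ContinuousLinearMap.sub_apply]
    ring
  have h5 : B (pos u) w ≤ 0 := hTmono u
  have h6 : c * ‖w‖ ^ 2 ≤ 0 := by
    have := h3.trans_eq h4
    linarith
  have hwz : w = 0 := by
    have hsq : ‖w‖ ^ 2 ≤ 0 := by
      by_contra h
      push_neg at h
      nlinarith
    have : ‖w‖ ^ 2 = 0 := le_antisymm hsq (sq_nonneg _)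
    exact norm_eq_zero.mp (pow_eq_zero_iff (by norm_num) |>.mp this)
  have hpu : pos u = u := by
    exact sub_eq_zero.mp hwz
  exact hpu ▸ hposmem u
end

section
/- Let V be a reflexive, strictly convex Banach space with strictly convex dual, ordered by a closed convex cone V₊, and let V₋ = −V₊. Define m(u) := J(u − P_{V₋}(u)), where J: V → V* is the (single-valued) duality mapping and P_{V₋} the metric projection onto V₋. Then: (a) m(u) = 0 whenever u ≤ 0; (b) m is monotone: ⟨m(u) − m(v), u − v⟩ ≥ 0 for all u, v; and (c) if zᵨ ⇀ z weakly in V and m(zᵨ) → 0 strongly in V* (as ρ → 0), then z ≤ 0. -/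
/-!
Strict convexity of the dual makes `J a` the only functional `F` with `F a = ‖a‖²` and
`‖F‖ ≤ ‖a‖`. A weak-* cluster point of `J (a - t • d)` as `t → 0⁺` (Banach–Alaoglu) is such a
functional, hence equals `J a`. If `‖a‖ ≤ ‖a - t • d‖` for small `t > 0`, the subgradient
inequality of `½‖·‖²` at `a - t • d` gives `J (a - t • d) d ≤ 0`, so `J a d ≤ 0`. With
`a = u - proj u` this is the variational inequality of the metric projection, and monotonicity of
`m` follows from that of `J`. For (c), `‖z n - proj (z n)‖ = ‖m (z n)‖ → 0`, so `zl` is also a weak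
limit of points of the closed convex set `V₋`, and Hahn–Banach separation keeps it there.
-/

open Filter Topology

section

variable {E : Type*} [NormedAddCommGroup E] [NormedSpace ℝ E]

theorem exists_tendsto_apply_of_tendsto_norm {ι : Type*} (U : Ultrafilter ι)
    (f : ι → StrongDual ℝ E) {r : ℝ} (hf : Tendsto (fun i => ‖f i‖) U (𝓝 r)) :
    ∃ F : StrongDual ℝ E, ‖F‖ ≤ r ∧ ∀ x, Tendsto (fun i => f i x) U (𝓝 (F x)) := by
  have hball : ∀ᶠ i in U, StrongDual.toWeakDual (f i) ∈
      WeakDual.toStrongDual ⁻¹' Metric.closedBall 0 (r + 1) := by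
    filter_upwards [hf.eventually_le_const (lt_add_one r)] with i hi
    simpa using hi
  obtain ⟨F, -, hF⟩ :=
    (WeakDual.isCompact_closedBall (0 : StrongDual ℝ E) (r + 1)).ultrafilter_le_nhds'
      (U.map fun i => StrongDual.toWeakDual (f i)) hball
  have hpt : ∀ x, Tendsto (fun i => f i x) U (𝓝 (F x)) :=
    tendsto_iff_forall_eval_tendsto_topDualPairing.mp hF
  refine ⟨WeakDual.toStrongDual F, ?_, hpt⟩
  refine ContinuousLinearMap.opNorm_le_bound _ (ge_of_tendsto' hf fun i => norm_nonneg _)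
    fun x => ?_
  exact le_of_tendsto_of_tendsto' (hpt x).norm (hf.mul_const ‖x‖) fun i => (f i).le_opNorm x

theorem two_mul_apply_sub_le {f : StrongDual ℝ E} {x : E} (hfx : f x = ‖x‖ ^ 2)
    (hf : ‖f‖ ≤ ‖x‖) (y : E) : 2 * f (y - x) ≤ ‖y‖ ^ 2 - ‖x‖ ^ 2 := by
  have hfy : f y ≤ ‖x‖ * ‖y‖ :=
    (le_abs_self _).trans ((f.le_opNorm y).trans (by gcongr))
  rw [map_sub, hfx]
  nlinarith [sq_nonneg (‖x‖ - ‖y‖)]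

theorem le_norm_of_apply_eq_mul_norm {f : StrongDual ℝ E} {x : E} {c : ℝ} (hx : x ≠ 0)
    (hfx : f x = c * ‖x‖) : c ≤ ‖f‖ :=
  le_of_mul_le_mul_right (hfx ▸ (le_abs_self _).trans (f.le_opNorm x)) (norm_pos_iff.mpr hx)

theorem eq_of_apply_self_eq_sq [StrictConvexSpace ℝ (StrongDual ℝ E)] {f g : StrongDual ℝ E}
    {x : E} (hfx : f x = ‖x‖ ^ 2) (hf : ‖f‖ ≤ ‖x‖) (hgx : g x = ‖x‖ ^ 2) (hg : ‖g‖ ≤ ‖x‖) :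
    f = g := by
  rcases eq_or_ne x 0 with rfl | hx
  · rw [norm_zero, norm_le_zero_iff] at hf hg
    rw [hf, hg]
  have hf' : ‖f‖ = ‖x‖ := hf.antisymm (le_norm_of_apply_eq_mul_norm hx (by rw [hfx]; ring))
  have hg' : ‖g‖ = ‖x‖ := hg.antisymm (le_norm_of_apply_eq_mul_norm hx (by rw [hgx]; ring))
  refine eq_of_norm_eq_of_norm_add_eq (hf'.trans hg'.symm) ((norm_add_le f g).antisymm ?_)
  rw [hf', hg']
  exact le_norm_of_apply_eq_mul_norm hx (by rw [add_apply, hfx, hgx]; ring)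

theorem Convex.mem_of_tendsto_apply_of_tendsto_norm_sub {ι : Type*} {l : Filter ι} [l.NeBot]
    {K : Set E} (hK : Convex ℝ K) (hKc : IsClosed K) {z p : ι → E} {x : E}
    (hz : ∀ f : StrongDual ℝ E, Tendsto (fun i => f (z i)) l (𝓝 (f x))) (hp : ∀ i, p i ∈ K)
    (hzp : Tendsto (fun i => ‖z i - p i‖) l (𝓝 0)) : x ∈ K := by
  by_contra hx
  obtain ⟨f, r, hfK, hfx⟩ := geometric_hahn_banach_closed_point hK hKc hx
  have hf_sub : Tendsto (fun i => f (z i - p i)) l (𝓝 0) :=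
    squeeze_zero_norm (fun i => f.le_opNorm _) (by simpa using hzp.const_mul ‖f‖)
  have hfp : Tendsto (fun i => f (p i)) l (𝓝 (f x)) := by
    simpa [map_sub] using (hz f).sub hf_sub
  exact (le_of_tendsto hfp (Eventually.of_forall fun i => (hfK _ (hp i)).le)).not_gt hfx

def IsDualityMap (J : E → StrongDual ℝ E) : Prop :=
  ∀ u, J u u = ‖u‖ ^ 2 ∧ ‖J u‖ = ‖u‖

namespace IsDualityMap

variable {J : E → StrongDual ℝ E}

theorem map_zero (hJ : IsDualityMap J) : J 0 = 0 :=
  norm_eq_zero.mp ((hJ 0).2.trans norm_zero)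

theorem sub_apply_sub_nonneg (hJ : IsDualityMap J) (u v : E) : 0 ≤ (J u - J v) (u - v) := by
  have hu := two_mul_apply_sub_le (hJ u).1 (hJ u).2.le v
  have hv := two_mul_apply_sub_le (hJ v).1 (hJ v).2.le u
  simp only [sub_apply, map_sub] at *
  linarith

theorem apply_nonpos_of_norm_le_norm_sub_smul [StrictConvexSpace ℝ (StrongDual ℝ E)]
    (hJ : IsDualityMap J) {a d : E} (h : ∀ᶠ t in 𝓝[>] (0 : ℝ), ‖a‖ ≤ ‖a - t • d‖) :
    J a d ≤ 0 := by
  set U := Ultrafilter.of (𝓝[>] (0 : ℝ))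
  have hU : (U : Filter ℝ) ≤ 𝓝[>] 0 := Ultrafilter.of_le _
  have ht : Tendsto id U (𝓝 (0 : ℝ)) := hU.trans nhdsWithin_le_nhds
  have hlim : Tendsto (fun t : ℝ => a - t • d) U (𝓝 a) := by
    simpa using tendsto_const_nhds.sub (ht.smul_const d)
  obtain ⟨F, hF, hFlim⟩ := exists_tendsto_apply_of_tendsto_norm U (fun t => J (a - t • d))
    (hlim.norm.congr fun t => ((hJ _).2).symm)
  have hd : ∀ᶠ t in 𝓝[>] (0 : ℝ), J (a - t • d) d ≤ 0 := by
    filter_upwards [h, self_mem_nhdsWithin] with t hat (htpos : 0 < t)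
    have hsub := two_mul_apply_sub_le (x := a - t • d) (hJ _).1 (hJ _).2.le a
    rw [sub_sub_cancel, map_smul, smul_eq_mul] at hsub
    have hsq : ‖a‖ ^ 2 ≤ ‖a - t • d‖ ^ 2 := by gcongr
    nlinarith
  have hFd : F d ≤ 0 := le_of_tendsto (hFlim d) (hU hd)
  have hFa : F a = ‖a‖ ^ 2 := by
    have hsplit : ∀ t : ℝ, J (a - t • d) a = ‖a - t • d‖ ^ 2 + t * J (a - t • d) d := by
      intro t
      have hself := (hJ (a - t • d)).1
      rw [map_sub, map_smul, smul_eq_mul] at hself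
      linarith
    refine tendsto_nhds_unique (hFlim a) ?_
    simpa [hsplit] using (hlim.norm.pow 2).add (ht.mul (hFlim d))
  have hJa : F = J a := eq_of_apply_self_eq_sq hFa hF (hJ a).1 (hJ a).2.le
  exact hJa ▸ hFd

theorem apply_sub_nonpos_of_isMinOn [StrictConvexSpace ℝ (StrongDual ℝ E)]
    (hJ : IsDualityMap J) {K : Set E} (hK : Convex ℝ K) {x p w : E}
    (hmin : IsMinOn (fun w => ‖x - w‖) K p) (hp : p ∈ K) (hw : w ∈ K) :
    J (x - p) (w - p) ≤ 0 := by
  refine hJ.apply_nonpos_of_norm_le_norm_sub_smul ?_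
  filter_upwards [Ioc_mem_nhdsGT one_pos] with t ht
  have hle : ‖x - p‖ ≤ ‖x - (p + t • (w - p))‖ :=
    hmin (hK.add_smul_sub_mem hp hw ⟨ht.1.le, ht.2⟩)
  rwa [← sub_sub] at hle

theorem sub_apply_sub_nonneg_of_isMinOn [StrictConvexSpace ℝ (StrongDual ℝ E)]
    (hJ : IsDualityMap J) {K : Set E} (hK : Convex ℝ K) {p : E → E} (hp : ∀ u, p u ∈ K)
    (hmin : ∀ u, IsMinOn (fun w => ‖u - w‖) K (p u)) (u v : E) :
    0 ≤ (J (u - p u) - J (v - p v)) (u - v) := by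
  have hmono := hJ.sub_apply_sub_nonneg (u - p u) (v - p v)
  have hu := hJ.apply_sub_nonpos_of_isMinOn hK (hmin u) (hp u) (hp v)
  have hv := hJ.apply_sub_nonpos_of_isMinOn hK (hmin v) (hp v) (hp u)
  have hsplit : u - v = (u - p u - (v - p v)) - (p v - p u) := by abel
  rw [hsplit]
  simp only [sub_apply, map_sub] at *
  linarith

end IsDualityMap

end

theorem duality_penalty_properties_general
    {V : Type*} [NormedAddCommGroup V] [NormedSpace ℝ V]
    [StrictConvexSpace ℝ (V →L[ℝ] ℝ)]
    (P : Set V) (hPclosed : IsClosed P) (hPconvex : Convex ℝ P)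
    (J : V → V →L[ℝ] ℝ)
    (hJ₁ : ∀ u : V, J u u = ‖u‖ ^ 2) (hJ₂ : ∀ u : V, ‖J u‖ = ‖u‖)
    (proj : V → V)
    (hprojmem : ∀ u : V, -proj u ∈ P)
    (hprojmin : ∀ u : V, ∀ w : V, -w ∈ P → ‖u - proj u‖ ≤ ‖u - w‖)
    (m : V → V →L[ℝ] ℝ) (hm : ∀ u : V, m u = J (u - proj u)) :
    (∀ u : V, -u ∈ P → m u = 0) ∧
    (∀ u v : V, 0 ≤ (m u - m v) (u - v)) ∧
    (∀ (z : ℕ → V) (zl : V),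
      (∀ f : V →L[ℝ] ℝ, Tendsto (fun n => f (z n)) atTop (𝓝 (f zl))) →
      Tendsto (fun n => ‖m (z n)‖) atTop (𝓝 0) → -zl ∈ P) := by
  have hJ : IsDualityMap J := fun u => ⟨hJ₁ u, hJ₂ u⟩
  have hproj : ∀ u, IsMinOn (fun w => ‖u - w‖) (-P) (proj u) := fun u w hw => hprojmin u w hw
  refine ⟨fun u hu => ?_, fun u v => ?_, fun z zl hweak hmz => ?_⟩
  · have hu_proj : u - proj u = 0 := norm_le_zero_iff.mp (by simpa using hprojmin u u hu)
    rw [hm, hu_proj, hJ.map_zero]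
  · simpa only [hm] using hJ.sub_apply_sub_nonneg_of_isMinOn hPconvex.neg hprojmem hproj u v
  · refine hPconvex.neg.mem_of_tendsto_apply_of_tendsto_norm_sub hPclosed.neg hweak
      (p := fun n => proj (z n)) (fun n => hprojmem (z n)) ?_
    simpa only [hm, hJ₂] using hmz

/-- properties of the penalty map `m(u) = J(u − P_{V₋}(u))` built from
the duality mapping `J` (characterized by `⟨Ju,u⟩ = ‖u‖² = ‖Ju‖²`) and the metric
projection `proj` onto the closed convex set `V₋ = -P`:
(a) `m(u) = 0` whenever `u ≤ 0`; (b) `m` is monotone; (c) if `z_ρ ⇀ z` weakly and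
`m(z_ρ) → 0` strongly in `V*`, then `z ≤ 0`. -/
theorem duality_penalty_properties
    {V : Type*} [NormedAddCommGroup V] [NormedSpace ℝ V]
    [StrictConvexSpace ℝ V] [StrictConvexSpace ℝ (V →L[ℝ] ℝ)]
    (P : Set V) (hPclosed : IsClosed P) (hPconvex : Convex ℝ P)
    (hPcone : ∀ (c : ℝ) (x : V), 0 ≤ c → x ∈ P → c • x ∈ P)
    (J : V → V →L[ℝ] ℝ)
    (hJ₁ : ∀ u : V, J u u = ‖u‖ ^ 2) (hJ₂ : ∀ u : V, ‖J u‖ = ‖u‖)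
    (proj : V → V)
    (hprojmem : ∀ u : V, -proj u ∈ P)
    (hprojmin : ∀ u : V, ∀ w : V, -w ∈ P → ‖u - proj u‖ ≤ ‖u - w‖)
    (m : V → V →L[ℝ] ℝ) (hm : ∀ u : V, m u = J (u - proj u)) :
    (∀ u : V, -u ∈ P → m u = 0) ∧
    (∀ u v : V, 0 ≤ (m u - m v) (u - v)) ∧
    (∀ (z : ℕ → V) (zl : V),
      (∀ f : V →L[ℝ] ℝ, Tendsto (fun n => f (z n)) atTop (𝓝 (f zl))) →
      Tendsto (fun n => ‖m (z n)‖) atTop (𝓝 0) → -zl ∈ P) :=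
  duality_penalty_properties_general P hPclosed hPconvex J hJ₁ hJ₂ proj hprojmem hprojmin m hm
end

section
/- Let V be a reflexive Banach space, A: V → V* linear bounded (constant C_b) and coercive (constant C_a), and suppose there exists v₀ ∈ V such that v₀ ≤ Φ(v) for all v ∈ V. Let m: V → V* satisfy m(v) = 0 when v ≤ 0 and be monotone. Then any solution yᵨ of the penalized equation A yᵨ + (1/ρ) m(yᵨ − Φ(yᵨ)) = f satisfies the uniform a priori bound (C_a/3)‖yᵨ‖²_V ≤ (3C_b²/(4C_a) + 1/2)‖v₀‖²_V + (3/(4C_a) + 1/2)‖f‖²_{V*}, independent of ρ > 0. -/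
set_option maxHeartbeats 1000000


/-- uniform (in `ρ`) a priori bound for solutions of the penalised
equation `A y + ρ⁻¹ m(y − Φ(y)) = f`, under the feasibility assumption
`v₀ ≤ Φ(v)` for all `v` (order induced by the cone `P`). -/
theorem penalised_apriori_bound
    {V : Type*} [NormedAddCommGroup V] [NormedSpace ℝ V]
    (P : Set V)
    (A : V →L[ℝ] V →L[ℝ] ℝ) (Ca Cb : ℝ) (hCa : 0 < Ca)
    (hbound : ∀ u v : V, A u v ≤ Cb * ‖u‖ * ‖v‖)
    (hcoerc : ∀ u : V, Ca * ‖u‖ ^ 2 ≤ A u u)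
    (m : V → V →L[ℝ] ℝ)
    (hmzero : ∀ v : V, -v ∈ P → m v = 0)
    (hmmono : ∀ u v : V, 0 ≤ (m u - m v) (u - v))
    (Φ : V → V) (v₀ : V) (hfeas : ∀ v : V, Φ v - v₀ ∈ P)
    (f : V →L[ℝ] ℝ) (ρ : ℝ) (hρ : 0 < ρ)
    (y : V) (heq : A y + ρ⁻¹ • m (y - Φ y) = f) :
    Ca / 3 * ‖y‖ ^ 2 ≤ (3 * Cb ^ 2 / (4 * Ca) + 1 / 2) * ‖v₀‖ ^ 2
      + (3 / (4 * Ca) + 1 / 2) * ‖f‖ ^ 2 := by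
  -- evaluate the equation at y - v₀
  have heval : A y (y - v₀) + ρ⁻¹ * (m (y - Φ y)) (y - v₀) = f (y - v₀) := by
    have := congrArg (fun g : V →L[ℝ] ℝ => g (y - v₀)) heq
    simpa using this
  -- zero of m at v₀ - Φ y
  have hz : m (v₀ - Φ y) = 0 := hmzero _ (by simpa [neg_sub] using hfeas y)
  -- monotonicity gives nonnegativity of the penalty term
  have hpen : 0 ≤ (m (y - Φ y)) (y - v₀) := by
    have h := hmmono (y - Φ y) (v₀ - Φ y)
    rw [hz, sub_zero, sub_sub_sub_cancel_right] at h
    exact h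
  have hpen' : 0 ≤ ρ⁻¹ * (m (y - Φ y)) (y - v₀) :=
    mul_nonneg (le_of_lt (inv_pos.mpr hρ)) hpen
  -- hence A y (y - v₀) ≤ f (y - v₀)
  have hmain : A y (y - v₀) ≤ f (y - v₀) := by linarith
  have hAyy : Ca * ‖y‖ ^ 2 ≤ A y y := hcoerc y
  have hsplit : A y (y - v₀) = A y y - A y v₀ := by
    simp [map_sub]
  have hfsplit : f (y - v₀) = f y - f v₀ := by simp
  have hAb : A y v₀ ≤ Cb * ‖y‖ * ‖v₀‖ := hbound y v₀
  have hfy : f y ≤ ‖f‖ * ‖y‖ := le_trans (le_abs_self _) (f.le_opNorm y)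
  have hfv : -f v₀ ≤ ‖f‖ * ‖v₀‖ := le_trans (neg_le_abs _) (f.le_opNorm v₀)
  have h1 : Ca * ‖y‖ ^ 2 ≤ Cb * ‖y‖ * ‖v₀‖ + ‖f‖ * ‖y‖ + ‖f‖ * ‖v₀‖ := by
    rw [hsplit] at hmain
    rw [hfsplit] at hmain
    linarith
  -- Young inequalities, after clearing denominators
  have h12 : (0:ℝ) < 12 * Ca := by positivity
  rw [← mul_le_mul_iff_right₀ h12]
  have hexp : 12 * Ca * ((3 * Cb ^ 2 / (4 * Ca) + 1 / 2) * ‖v₀‖ ^ 2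
      + (3 / (4 * Ca) + 1 / 2) * ‖f‖ ^ 2)
      = (9 * Cb ^ 2 + 6 * Ca) * ‖v₀‖ ^ 2 + (9 + 6 * Ca) * ‖f‖ ^ 2 := by
    field_simp
    ring
  rw [hexp]
  have h4 : (0:ℝ) ≤ 4 * Ca := by positivity
  nlinarith [mul_le_mul_of_nonneg_left h1 h4,
    sq_nonneg (2 * Ca * ‖y‖ - 3 * Cb * ‖v₀‖),
    sq_nonneg (2 * Ca * ‖y‖ - 3 * ‖f‖),
    mul_nonneg hCa.le (sq_nonneg (‖f‖ - ‖v₀‖))]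
end

section
/- Let V be a Hilbert space, A: V → V* linear bounded (C_b) and coercive (C_a), f, d ∈ V*, and S(g, ψ) the solution operator of the VI with obstacle Φ(ψ): find u ≤ Φ(ψ) with ⟨Au − g, u − v⟩ ≤ 0 for all v ≤ Φ(ψ). Assume the continuous-dependence estimate ‖S(g₁,ψ₁) − S(g₂,ψ₂)‖ ≤ (1 + C_b/C_a)‖Φ(ψ₁) − Φ(ψ₂)‖ + (1/C_a)‖g₁ − g₂‖_{V*}, and that Φ is Lipschitz on the ball B_ε(y) with constant C_Φ < C_a/(C_a + C_b), where y = S(f, y). Then for any 0 < R ≤ ε and any s ≥ 0 with s ≤ C_a ‖d‖_{V*}^{-1} R (1 − (1 + C_b/C_a) C_Φ), the map v ↦ S(f + s d, v) maps the closed ball B_R(y) into itself and is a contraction on B_R(y) with contraction constant C_Φ(1 + C_b/C_a) < 1. -/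
/-!
Write `k = 1 + C_b/C_a`. Since `C_a/(C_a + C_b) · k = 1`, the hypothesis on `C_Φ` is exactly
`C_Φ k < 1`. With equal sources the continuous-dependence estimate makes `S(g, ·)` Lipschitz with
constant `k C_Φ` on the ball; comparing `S(f + s d, v)` with `y = S(f, y)` instead costs the
additional term `s ‖d‖ / C_a`, which the bound on `s` keeps below `R (1 - k C_Φ)`, so
`‖S(f + s d, v) - y‖ ≤ k C_Φ R + R (1 - k C_Φ) = R`.
-/

open Metric

/-- The continuous-dependence estimate for the solution map `S g ψ` of the obstacle problem with
source `g` and obstacle `Φ ψ`; in the paper `k = 1 + C_b/C_a` and `c = 1/C_a`. -/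
def ContinuousDependence {G V W : Type*} [SeminormedAddCommGroup G] [SeminormedAddCommGroup V]
    [SeminormedAddCommGroup W] (S : G → V → V) (Φ : V → W) (k c : ℝ) : Prop :=
  ∀ (g₁ g₂ : G) (ψ₁ ψ₂ : V), ‖S g₁ ψ₁ - S g₂ ψ₂‖ ≤ k * ‖Φ ψ₁ - Φ ψ₂‖ + c * ‖g₁ - g₂‖

theorem mul_one_add_div_lt_one {Ca Cb C : ℝ} (hCa : 0 < Ca) (hCb : 0 ≤ Cb)
    (hC : C < Ca / (Ca + Cb)) : C * (1 + Cb / Ca) < 1 := by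
  have hk : 0 < 1 + Cb / Ca := by positivity
  have hinv : Ca / (Ca + Cb) * (1 + Cb / Ca) = 1 := by field_simp
  simpa [hinv] using mul_lt_mul_of_pos_right hC hk

theorem nonneg_of_norm_sub_le_mul_on_closedBall {E F : Type*} [NormedAddCommGroup E]
    [NormedSpace ℝ E] [Nontrivial E] [SeminormedAddCommGroup F] {Φ : E → F} {y : E} {ε C : ℝ}
    (hε : 0 < ε) (hΦ : ∀ u ∈ closedBall y ε, ∀ v ∈ closedBall y ε, ‖Φ u - Φ v‖ ≤ C * ‖u - v‖) :
    0 ≤ C := by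
  obtain ⟨x, hx⟩ := exists_norm_eq E hε.le
  have hxy : y + x ∈ closedBall y ε := by simp [hx]
  have h := hΦ (y + x) hxy y (mem_closedBall_self hε.le)
  rw [add_sub_cancel_left, hx] at h
  exact nonneg_of_mul_nonneg_left ((norm_nonneg _).trans h) hε

theorem inv_mul_norm_smul_le {E : Type*} [SeminormedAddCommGroup E] [NormedSpace ℝ E]
    {c s r : ℝ} {d : E} (hc : 0 < c) (hs0 : 0 ≤ s) (hr : 0 ≤ r) (hs : s ≤ c * ‖d‖⁻¹ * r) :
    c⁻¹ * ‖s • d‖ ≤ r := by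
  rw [norm_smul, Real.norm_of_nonneg hs0, inv_mul_le_iff₀ hc]
  rcases (norm_nonneg d).eq_or_lt with hd | hd
  · rw [← hd, mul_zero]
    positivity
  · calc s * ‖d‖ ≤ c * ‖d‖⁻¹ * r * ‖d‖ := by gcongr
      _ = c * r := by field_simp

namespace ContinuousDependence

variable {G V W : Type*} [SeminormedAddCommGroup G] [SeminormedAddCommGroup V]
  [SeminormedAddCommGroup W] {S : G → V → V} {Φ : V → W} {k c L : ℝ}

theorem norm_sub_le (hS : ContinuousDependence S Φ k c) (hk : 0 ≤ k) (g : G) {v w : V}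
    (hΦ : ‖Φ v - Φ w‖ ≤ L * ‖v - w‖) : ‖S g v - S g w‖ ≤ L * k * ‖v - w‖ :=
  calc ‖S g v - S g w‖ ≤ k * ‖Φ v - Φ w‖ := by simpa using hS g g v w
    _ ≤ k * (L * ‖v - w‖) := by gcongr
    _ = L * k * ‖v - w‖ := by ring

theorem dist_le (hS : ContinuousDependence S Φ k c) (hk : 0 ≤ k) (hL : 0 ≤ L) {g g' : G}
    {y v : V} {R : ℝ} (hy : y = S g y) (hΦ : ‖Φ v - Φ y‖ ≤ L * ‖v - y‖) (hv : dist v y ≤ R)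
    (hg : c * ‖g' - g‖ ≤ R * (1 - k * L)) : dist (S g' v) y ≤ R :=
  calc dist (S g' v) y = ‖S g' v - S g y‖ := by rw [dist_eq_norm, ← hy]
    _ ≤ k * ‖Φ v - Φ y‖ + c * ‖g' - g‖ := hS g' g v y
    _ ≤ k * (L * R) + R * (1 - k * L) := by
        rw [dist_eq_norm] at hv
        gcongr
        exact hΦ.trans (by gcongr)
    _ = R := by ring

end ContinuousDependence

theorem vi_iteration_contraction_general
    {V : Type*} [NormedAddCommGroup V] [InnerProductSpace ℝ V]
    (Ca Cb : ℝ) (hCa : 0 < Ca) (hCb : 0 < Cb)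
    (S : (V →L[ℝ] ℝ) → V → V) (Φ : V → V)
    (hdep : ∀ (g₁ g₂ : V →L[ℝ] ℝ) (ψ₁ ψ₂ : V),
      ‖S g₁ ψ₁ - S g₂ ψ₂‖ ≤ (1 + Cb / Ca) * ‖Φ ψ₁ - Φ ψ₂‖ + Ca⁻¹ * ‖g₁ - g₂‖)
    (f d : V →L[ℝ] ℝ) (y : V) (hy : y = S f y)
    (ε CΦ : ℝ) (hε : 0 < ε) (hCΦ : CΦ < Ca / (Ca + Cb))
    (hΦlip : ∀ u ∈ Metric.closedBall y ε, ∀ v ∈ Metric.closedBall y ε,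
      ‖Φ u - Φ v‖ ≤ CΦ * ‖u - v‖)
    (R : ℝ) (hRε : R ≤ ε)
    (s : ℝ) (hs0 : 0 ≤ s)
    (hs : s ≤ Ca * ‖d‖⁻¹ * R * (1 - (1 + Cb / Ca) * CΦ)) :
    CΦ * (1 + Cb / Ca) < 1 ∧
    (∀ v ∈ Metric.closedBall y R, S (f + s • d) v ∈ Metric.closedBall y R) ∧
    (∀ v ∈ Metric.closedBall y R, ∀ w ∈ Metric.closedBall y R,
      ‖S (f + s • d) v - S (f + s • d) w‖ ≤ CΦ * (1 + Cb / Ca) * ‖v - w‖) := by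
  have hk : 0 ≤ 1 + Cb / Ca := by positivity
  have hlt := mul_one_add_div_lt_one hCa hCb.le hCΦ
  have hball : closedBall y R ⊆ closedBall y ε := closedBall_subset_closedBall hRε
  refine ⟨hlt, fun v hv => ?_, fun v hv w hw => ?_⟩
  · rcases subsingleton_or_nontrivial V with _ | _
    · rwa [Subsingleton.elim (S (f + s • d) v) v]
    have hR : 0 ≤ R := nonempty_closedBall.mp ⟨v, hv⟩
    have hy' : y ∈ closedBall y ε := mem_closedBall_self hε.le
    refine ContinuousDependence.dist_le hdep hk
      (nonneg_of_norm_sub_le_mul_on_closedBall hε hΦlip) hy (hΦlip v (hball hv) y hy') hv ?_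
    have hr : 0 ≤ R * (1 - (1 + Cb / Ca) * CΦ) := mul_nonneg hR (by linarith)
    rw [add_sub_cancel_left]
    exact inv_mul_norm_smul_le hCa hs0 hr (by rwa [← mul_assoc])
  · exact ContinuousDependence.norm_sub_le hdep hk _ (hΦlip v (hball hv) w (hball hw))

/-- for `s` small enough, the VI solution map `v ↦ S(f + s d, v)`
is a self-map of the closed ball `B_R(y)` around the QVI solution `y = S(f,y)`
and a contraction there with constant `C_Φ (1 + C_b/C_a) < 1`. -/
theorem vi_iteration_contraction
    {V : Type*} [NormedAddCommGroup V] [InnerProductSpace ℝ V]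
    (Ca Cb : ℝ) (hCa : 0 < Ca) (hCb : 0 < Cb)
    (S : (V →L[ℝ] ℝ) → V → V) (Φ : V → V)
    (hdep : ∀ (g₁ g₂ : V →L[ℝ] ℝ) (ψ₁ ψ₂ : V),
      ‖S g₁ ψ₁ - S g₂ ψ₂‖ ≤ (1 + Cb / Ca) * ‖Φ ψ₁ - Φ ψ₂‖ + Ca⁻¹ * ‖g₁ - g₂‖)
    (f d : V →L[ℝ] ℝ) (y : V) (hy : y = S f y)
    (ε CΦ : ℝ) (hε : 0 < ε) (hCΦ : CΦ < Ca / (Ca + Cb))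
    (hΦlip : ∀ u ∈ Metric.closedBall y ε, ∀ v ∈ Metric.closedBall y ε,
      ‖Φ u - Φ v‖ ≤ CΦ * ‖u - v‖)
    (R : ℝ) (hR0 : 0 < R) (hRε : R ≤ ε)
    (s : ℝ) (hs0 : 0 ≤ s)
    (hs : s ≤ Ca * ‖d‖⁻¹ * R * (1 - (1 + Cb / Ca) * CΦ)) :
    CΦ * (1 + Cb / Ca) < 1 ∧
    (∀ v ∈ Metric.closedBall y R, S (f + s • d) v ∈ Metric.closedBall y R) ∧
    (∀ v ∈ Metric.closedBall y R, ∀ w ∈ Metric.closedBall y R,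
      ‖S (f + s • d) v - S (f + s • d) w‖ ≤ CΦ * (1 + Cb / Ca) * ‖v - w‖) :=
  vi_iteration_contraction_general Ca Cb hCa hCb S Φ hdep f d y hy ε CΦ hε hCΦ hΦlip R hRε s hs0 hs
end

section
/- Let V be a Hilbert space, A: V → V* linear bounded (C_b) and coercive (C_a), and L: V → V a Lipschitz map with Lipschitz constant C_L < C_a/C_b. Let 𝒦 ⊂ V be a nonempty closed convex cone and d ∈ V*. For γ ∈ V define T(γ) as the unique solution β of the VI: β ∈ L(γ) + 𝒦 and ⟨Aβ − d, β − φ⟩ ≤ 0 for all φ ∈ L(γ) + 𝒦 (unique by Lions–Stampacchia). Then T: V → V is a contraction with constant (C_b/C_a) C_L < 1; consequently T has a unique fixed point α, which is the unique solution of the QVI: α ∈ L(α) + 𝒦, ⟨Aα − d, α − v⟩ ≤ 0 for all v ∈ L(α) + 𝒦. -/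
/-- the VI solution map `T` with moving cone `L(γ) + 𝒦` is a
contraction with constant `(C_b/C_a) C_L < 1`; hence it has a unique fixed point,
which is the unique solution of the QVI `α ∈ L(α) + 𝒦`,
`⟨Aα − d, α − v⟩ ≤ 0 ∀ v ∈ L(α) + 𝒦`. -/
theorem qvi_derivative_contraction
    {V : Type*} [NormedAddCommGroup V] [InnerProductSpace ℝ V] [CompleteSpace V]
    (A : V →L[ℝ] V →L[ℝ] ℝ) (Ca Cb : ℝ) (hCa : 0 < Ca) (hCb : 0 < Cb)
    (hbound : ∀ u v : V, A u v ≤ Cb * ‖u‖ * ‖v‖)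
    (hcoerc : ∀ u : V, Ca * ‖u‖ ^ 2 ≤ A u u)
    (K : Set V) (hKne : K.Nonempty) (hKclosed : IsClosed K) (hKconvex : Convex ℝ K)
    (hKcone : ∀ (c : ℝ) (x : V), 0 ≤ c → x ∈ K → c • x ∈ K)
    (L : V → V) (CL : ℝ) (hCL : CL < Ca / Cb)
    (hLlip : ∀ u v : V, ‖L u - L v‖ ≤ CL * ‖u - v‖)
    (d : V →L[ℝ] ℝ) (T : V → V)
    (hT : ∀ γ : V, T γ - L γ ∈ K ∧
      ∀ φ : V, φ - L γ ∈ K → (A (T γ) - d) (T γ - φ) ≤ 0) :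
    (∀ γ₁ γ₂ : V, ‖T γ₁ - T γ₂‖ ≤ Cb / Ca * CL * ‖γ₁ - γ₂‖) ∧
    Cb / Ca * CL < 1 ∧
    (∃! α : V, T α = α) ∧
    (∃! α : V, α - L α ∈ K ∧ ∀ v : V, v - L α ∈ K → (A α - d) (α - v) ≤ 0) := by
  -- contraction estimate
  have key : ∀ γ₁ γ₂ : V, ‖T γ₁ - T γ₂‖ ≤ Cb / Ca * CL * ‖γ₁ - γ₂‖ := by
    intro γ₁ γ₂
    obtain ⟨h1K, h1⟩ := hT γ₁
    obtain ⟨h2K, h2⟩ := hT γ₂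
    have t1 := h1 (T γ₂ - L γ₂ + L γ₁) (by simpa using h2K)
    have t2 := h2 (T γ₁ - L γ₁ + L γ₂) (by simpa using h1K)
    have hAee : A (T γ₁ - T γ₂) (T γ₁ - T γ₂) ≤
        A (T γ₁ - T γ₂) (L γ₁ - L γ₂) := by
      simp only [map_sub, map_add, ContinuousLinearMap.sub_apply,
        ContinuousLinearMap.add_apply] at t1 t2 ⊢
      linarith
    have hLg : ‖L γ₁ - L γ₂‖ ≤ CL * ‖γ₁ - γ₂‖ := hLlip γ₁ γ₂
    have hCLg : 0 ≤ CL * ‖γ₁ - γ₂‖ := (norm_nonneg _).trans hLg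
    have hbd : A (T γ₁ - T γ₂) (L γ₁ - L γ₂) ≤
        Cb * ‖T γ₁ - T γ₂‖ * (CL * ‖γ₁ - γ₂‖) := by
      calc A (T γ₁ - T γ₂) (L γ₁ - L γ₂) ≤ Cb * ‖T γ₁ - T γ₂‖ * ‖L γ₁ - L γ₂‖ :=
            hbound _ _
        _ ≤ Cb * ‖T γ₁ - T γ₂‖ * (CL * ‖γ₁ - γ₂‖) := by
            apply mul_le_mul_of_nonneg_left hLg
            positivity
    have hmain : Ca * ‖T γ₁ - T γ₂‖ ^ 2 ≤ Cb * ‖T γ₁ - T γ₂‖ * (CL * ‖γ₁ - γ₂‖) :=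
      le_trans (hcoerc _) (le_trans hAee hbd)
    rcases eq_or_lt_of_le (norm_nonneg (T γ₁ - T γ₂)) with h0 | h0
    · rw [← h0, mul_assoc]
      exact mul_nonneg (div_pos hCb hCa).le hCLg
    · rw [show Cb / Ca * CL * ‖γ₁ - γ₂‖ = Cb * (CL * ‖γ₁ - γ₂‖) / Ca by ring,
        le_div_iff₀ hCa]
      nlinarith [hmain, h0]
  have hk1 : Cb / Ca * CL < 1 := by
    rw [div_mul_eq_mul_div, div_lt_one hCa]
    calc Cb * CL < Cb * (Ca / Cb) := mul_lt_mul_of_pos_left hCL hCb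
      _ = Ca := by field_simp
  set k : NNReal := Real.toNNReal (Cb / Ca * CL) with hkdef
  have hlip : LipschitzWith k T := by
    apply LipschitzWith.of_dist_le_mul
    intro x y
    rw [dist_eq_norm, dist_eq_norm]
    exact le_trans (key x y)
      (mul_le_mul_of_nonneg_right (Real.le_coe_toNNReal _) (norm_nonneg _))
  have hklt : k < 1 := by
    rw [hkdef, ← Real.toNNReal_one]
    exact (Real.toNNReal_lt_toNNReal_iff one_pos).mpr hk1
  have hC : ContractingWith k T := ⟨hklt, hlip⟩
  refine ⟨key, hk1, ⟨hC.fixedPoint T, hC.fixedPoint_isFixedPt,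
    fun y hy => hC.fixedPoint_unique hy⟩, ?_⟩
  -- QVI: solutions are exactly fixed points of T
  have fp_of_qvi : ∀ β : V, (β - L β ∈ K ∧ ∀ v : V, v - L β ∈ K →
      (A β - d) (β - v) ≤ 0) → T β = β := by
    rintro β ⟨hβK, hβ⟩
    obtain ⟨hK', hV'⟩ := hT β
    have a1 := hV' β hβK
    have a2 := hβ (T β) hK'
    have h0 : A (T β - β) (T β - β) ≤ 0 := by
      simp only [map_sub, ContinuousLinearMap.sub_apply] at a1 a2 ⊢
      linarith
    have hco := hcoerc (T β - β)
    have hsq : ‖T β - β‖ ^ 2 ≤ 0 := by nlinarith [hco, h0]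
    have hz : ‖T β - β‖ ^ 2 = 0 := le_antisymm hsq (sq_nonneg _)
    have hn : ‖T β - β‖ = 0 := (pow_eq_zero_iff two_ne_zero).mp hz
    have := norm_eq_zero.mp hn
    rw [sub_eq_zero] at this
    exact this
  refine ⟨hC.fixedPoint T, ?_, ?_⟩
  · obtain ⟨hK', hV'⟩ := hT (hC.fixedPoint T)
    rw [hC.fixedPoint_isFixedPt] at hK' hV'
    exact ⟨hK', hV'⟩
  · intro β hβ
    exact hC.fixedPoint_unique (fp_of_qvi β hβ)
end

section
/- Let V be a Banach space, A: V → V* linear, y* ∈ V, and suppose for all z in a ball B around y*: (I − Φ'(z)) is invertible on V and A(I − Φ'(z))⁻¹: V → V* is bounded with constant C_b' and coercive with constant C_a' > 0, both uniform in z ∈ B. If zₙ → z strongly in V (zₙ, z ∈ B) and qₙ ⇀ q weakly in V, then ⟨A(I − Φ'(z))⁻¹ q, q⟩ ≤ liminfₙ ⟨A(I − Φ'(zₙ))⁻¹ qₙ, qₙ⟩. -/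
open Filter Topology

/-- weak lower semicontinuity of the coercive form:
if `A(I − Φ'(z))⁻¹` is uniformly bounded and coercive on the ball `B`, `zₙ → z`
strongly and `qₙ ⇀ q` weakly, then
`⟨A(I − Φ'(z))⁻¹ q, q⟩ ≤ liminfₙ ⟨A(I − Φ'(zₙ))⁻¹ qₙ, qₙ⟩`. -/
theorem coercive_form_liminf
    {V : Type*} [NormedAddCommGroup V] [NormedSpace ℝ V]
    (A : V →L[ℝ] V →L[ℝ] ℝ)
    (ystar : V) (ε : ℝ) (hε : 0 < ε)
    (Φ' : V → V →L[ℝ] V)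
    (hcont : ContinuousOn Φ' (Metric.closedBall ystar ε))
    (inv : V → V →L[ℝ] V)
    (hinv₁ : ∀ z ∈ Metric.closedBall ystar ε,
      (ContinuousLinearMap.id ℝ V - Φ' z).comp (inv z) = ContinuousLinearMap.id ℝ V)
    (hinv₂ : ∀ z ∈ Metric.closedBall ystar ε,
      (inv z).comp (ContinuousLinearMap.id ℝ V - Φ' z) = ContinuousLinearMap.id ℝ V)
    (Ca' Cb' : ℝ) (hCa' : 0 < Ca')
    (hbddform : ∀ z ∈ Metric.closedBall ystar ε, ∀ u v : V,
      A (inv z u) v ≤ Cb' * ‖u‖ * ‖v‖)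
    (hcoercform : ∀ z ∈ Metric.closedBall ystar ε, ∀ v : V,
      Ca' * ‖v‖ ^ 2 ≤ A (inv z v) v)
    (z : ℕ → V) (zl : V)
    (hz : ∀ n, z n ∈ Metric.closedBall ystar ε)
    (hzl : zl ∈ Metric.closedBall ystar ε)
    (hzconv : Tendsto z atTop (𝓝 zl))
    (q : ℕ → V) (ql : V)
    (hqw : ∀ f : V →L[ℝ] ℝ, Tendsto (fun n => f (q n)) atTop (𝓝 (f ql))) :
    A (inv zl ql) ql ≤ Filter.liminf (fun n => A (inv (z n) (q n)) (q n)) atTop := by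
  -- boundedness of the weakly convergent sequence
  obtain ⟨M, hM⟩ : ∃ M, ∀ n, ‖q n‖ ≤ M := by
    obtain ⟨C, hC⟩ := banach_steinhaus
      (g := fun n => NormedSpace.inclusionInDoubleDual ℝ V (q n)) (fun f => by
        obtain ⟨C, hC⟩ := ((hqw f).norm.isBoundedUnder_le).bddAbove_range
        exact ⟨C, fun n => by
          simpa [NormedSpace.dual_def] using hC (Set.mem_range_self n)⟩)
    exact ⟨C, fun n => by
      simpa using ((NormedSpace.inclusionInDoubleDualLi ℝ (E := V)).norm_map (q n)) ▸ hC n⟩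
  have hM0 : 0 ≤ M := le_trans (norm_nonneg _) (hM 0)
  -- operator convergence of Φ' (z n)
  have hΦconv : Tendsto (fun n => Φ' (z n)) atTop (𝓝 (Φ' zl)) := by
    refine ((hcont zl hzl).tendsto).comp ?_
    exact tendsto_nhdsWithin_iff.2 ⟨hzconv, Eventually.of_forall hz⟩
  have hδ : Tendsto (fun n => ‖Φ' (z n) - Φ' zl‖) atTop (𝓝 0) := by
    have := (hΦconv.sub_const (Φ' zl)).norm
    simpa using this
  -- identity for differences of inverses
  have hdiff : ∀ n, inv (z n) - inv zl
      = ((inv (z n)).comp (Φ' (z n) - Φ' zl)).comp (inv zl) := by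
    intro n
    have h1 := hinv₁ zl hzl
    have h2 := hinv₂ (z n) (hz n)
    have : ((inv (z n)).comp (Φ' (z n) - Φ' zl)).comp (inv zl)
        = (inv (z n)).comp ((ContinuousLinearMap.id ℝ V - Φ' zl).comp (inv zl))
          - ((inv (z n)).comp (ContinuousLinearMap.id ℝ V - Φ' (z n))).comp (inv zl) := by
      ext v; simp [map_sub]
    rw [this, h1, h2]; ext v; simp
  -- eventual bound for ‖inv (z n)‖
  set K := ‖inv zl‖ with hK
  have hK0 : 0 ≤ K := norm_nonneg _
  have hevsmall : ∀ᶠ n in atTop, ‖Φ' (z n) - Φ' zl‖ * K ≤ 1 / 2 := by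
    have : Tendsto (fun n => ‖Φ' (z n) - Φ' zl‖ * K) atTop (𝓝 0) := by
      simpa using hδ.mul_const K
    exact this.eventually_le_const (by norm_num)
  have hinvbd : ∀ᶠ n in atTop, ‖inv (z n) - inv zl‖ ≤ 2 * K * K * ‖Φ' (z n) - Φ' zl‖ := by
    filter_upwards [hevsmall] with n hn
    have hb : ‖inv (z n) - inv zl‖ ≤ ‖inv (z n)‖ * ‖Φ' (z n) - Φ' zl‖ * K := by
      rw [hdiff n]
      calc ‖((inv (z n)).comp (Φ' (z n) - Φ' zl)).comp (inv zl)‖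
          ≤ ‖(inv (z n)).comp (Φ' (z n) - Φ' zl)‖ * ‖inv zl‖ :=
            ContinuousLinearMap.opNorm_comp_le _ _
        _ ≤ ‖inv (z n)‖ * ‖Φ' (z n) - Φ' zl‖ * K :=
            mul_le_mul_of_nonneg_right (ContinuousLinearMap.opNorm_comp_le _ _) hK0
    have hNbd : ‖inv (z n)‖ ≤ 2 * K := by
      have h1 : ‖inv (z n)‖ ≤ K + ‖inv (z n) - inv zl‖ := by
        have := norm_add_le (inv zl) (inv (z n) - inv zl)
        simpa using this
      have h2 : ‖inv (z n)‖ ≤ K + ‖inv (z n)‖ * (1 / 2) := by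
        refine h1.trans (add_le_add_right ?_ _)
        calc ‖inv (z n) - inv zl‖ ≤ ‖inv (z n)‖ * ‖Φ' (z n) - Φ' zl‖ * K := hb
          _ = ‖inv (z n)‖ * (‖Φ' (z n) - Φ' zl‖ * K) := by ring
          _ ≤ ‖inv (z n)‖ * (1 / 2) :=
            mul_le_mul_of_nonneg_left hn (norm_nonneg _)
      linarith
    calc ‖inv (z n) - inv zl‖ ≤ ‖inv (z n)‖ * ‖Φ' (z n) - Φ' zl‖ * K := hb
      _ ≤ (2 * K) * ‖Φ' (z n) - Φ' zl‖ * K := by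
          exact mul_le_mul_of_nonneg_right
            (mul_le_mul_of_nonneg_right hNbd (norm_nonneg _)) hK0
      _ = 2 * K * K * ‖Φ' (z n) - Φ' zl‖ := by ring
  have hinvconv : Tendsto (fun n => ‖inv (z n) - inv zl‖) atTop (𝓝 0) := by
    have hub : Tendsto (fun n => 2 * K * K * ‖Φ' (z n) - Φ' zl‖) atTop (𝓝 0) := by
      simpa using hδ.const_mul (2 * K * K)
    refine squeeze_zero' (Eventually.of_forall fun n => norm_nonneg _) hinvbd hub
  -- the perturbation term d n → 0
  set d : ℕ → ℝ := fun n => A (inv (z n) (q n)) (q n) - A (inv zl (q n)) (q n) with hd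
  have hdconv : Tendsto d atTop (𝓝 0) := by
    have hub : Tendsto (fun n => ‖A‖ * ‖inv (z n) - inv zl‖ * (M * M)) atTop (𝓝 0) := by
      have := (hinvconv.const_mul ‖A‖).mul_const (M * M)
      simpa using this
    refine squeeze_zero_norm' ?_ hub
    filter_upwards with n
    have : d n = A ((inv (z n) - inv zl) (q n)) (q n) := by
      simp [hd, map_sub, ContinuousLinearMap.sub_apply]
    rw [this]
    calc ‖A ((inv (z n) - inv zl) (q n)) (q n)‖
        ≤ ‖A‖ * ‖(inv (z n) - inv zl) (q n)‖ * ‖q n‖ := A.le_opNorm₂ _ _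
      _ ≤ ‖A‖ * (‖inv (z n) - inv zl‖ * M) * M := by
          gcongr
          · exact ((inv (z n) - inv zl).le_opNorm _).trans (by gcongr; exact hM n)
          · exact hM n
      _ = ‖A‖ * ‖inv (z n) - inv zl‖ * (M * M) := by ring
  -- the "linearized" term c n → L
  set L : ℝ := A (inv zl ql) ql with hL
  set c : ℕ → ℝ := fun n =>
    A (inv zl (q n)) ql + A (inv zl ql) (q n) - L with hc
  have hcconv : Tendsto c atTop (𝓝 L) := by
    have h1 : Tendsto (fun n => A (inv zl (q n)) ql) atTop (𝓝 (A (inv zl ql) ql)) := by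
      have := hqw ((A.flip ql).comp (inv zl))
      simpa using this
    have h2 := hqw (A (inv zl ql))
    have := (h1.add h2).sub (tendsto_const_nhds (x := L))
    simpa [hc, hL] using this
  -- coercivity gives the pointwise inequality
  have hineq : ∀ n, c n + d n ≤ A (inv (z n) (q n)) (q n) := by
    intro n
    have hco : 0 ≤ A (inv zl (q n - ql)) (q n - ql) := by
      refine le_trans ?_ (hcoercform zl hzl (q n - ql))
      positivity
    have hexp : A (inv zl (q n - ql)) (q n - ql)
        = A (inv zl (q n)) (q n) - A (inv zl (q n)) ql
          - A (inv zl ql) (q n) + A (inv zl ql) ql := by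
      simp [map_sub, ContinuousLinearMap.sub_apply]; ring
    have : c n ≤ A (inv zl (q n)) (q n) := by
      rw [hexp] at hco; simp only [hc, hL]; linarith
    simp only [hd]; linarith
  -- conclude with liminf
  have hcd : Tendsto (fun n => c n + d n) atTop (𝓝 L) := by
    simpa using hcconv.add hdconv
  calc L = liminf (fun n => c n + d n) atTop := hcd.liminf_eq.symm
    _ ≤ liminf (fun n => A (inv (z n) (q n)) (q n)) atTop := by
        refine liminf_le_liminf (Eventually.of_forall hineq) ?_ ?_
        · exact hcd.isBoundedUnder_ge
        · refine IsBoundedUnder.isCoboundedUnder_ge ⟨‖A‖ * K * M * M + 1, ?_⟩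
          rw [eventually_map]
          filter_upwards [hdconv.eventually_le_const (show (0:ℝ) < 1 by norm_num)] with n hn
          have hbl : A (inv zl (q n)) (q n) ≤ ‖A‖ * K * M * M := by
            calc A (inv zl (q n)) (q n) ≤ ‖A (inv zl (q n)) (q n)‖ := le_abs_self _
              _ ≤ ‖A‖ * ‖inv zl (q n)‖ * ‖q n‖ := A.le_opNorm₂ _ _
              _ ≤ ‖A‖ * (K * M) * M := by
                  gcongr
                  · exact ((inv zl).le_opNorm _).trans (by gcongr; exact hM n)
                  · exact hM n
              _ = ‖A‖ * K * M * M := by ring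
          have : A (inv (z n) (q n)) (q n) = A (inv zl (q n)) (q n) + d n := by
            simp [hd]
          rw [this]; linarith
end
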